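/- arXiv:2212.09279 — 10 statements merged into one kernel-verified Lean document; each statement's English description precedes it below -/
import Mathlib

section
/- Let 𝓕 be a finite nonempty union-closed family of finite sets with ∅ ∉ 𝓕, let k be the size of a smallest set of 𝓕 and n the size of the largest set of 𝓕, and let f be the number of abundant elements for 𝓕. Then f ≥ min { n, 2k − n + 1 }. -/
/-- A family of finite sets (of naturals) is union-closed. -/
def UnionClosed (F : Finset (Finset ℕ)) : Prop :=
  ∀ A ∈ F, ∀ B ∈ F, A ∪ B ∈ F

/-- An element `x` is abundant for `F` if it belongs to more than half of the sets of `F`. -/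
def Abundant (F : Finset (Finset ℕ)) (x : ℕ) : Prop :=
  2 * (F.filter (fun A => x ∈ A)).card > F.card

instance (F : Finset (Finset ℕ)) : DecidablePred (Abundant F) := fun x =>
  inferInstanceAs (Decidable (2 * (F.filter (fun A => x ∈ A)).card > F.card))

/-- `F` is twin-free: for every two distinct elements of the union of all its sets,
some set of `F` contains exactly one of them. -/
def TwinFree (F : Finset (Finset ℕ)) : Prop :=
  ∀ a ∈ F.sup id, ∀ b ∈ F.sup id, a ≠ b → ∃ A ∈ F, (A ∩ {a, b}).card = 1

/-- `F` is an `(f,k,n)`-construction: it is a nonempty union-closed family with exactly `f`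
abundant elements, a smallest set of size `k`, and the largest set (the union) of size `n`. -/
def IsConstruction (F : Finset (Finset ℕ)) (f k n : ℕ) : Prop :=
  F.Nonempty ∧ UnionClosed F ∧
  ((F.sup id).filter (Abundant F)).card = f ∧
  (∃ S ∈ F, S.card = k) ∧ (∀ A ∈ F, k ≤ A.card) ∧
  (F.sup id).card = n

/-!
Count the pairs `(x, A)` with `x ∈ A ∈ 𝓕`. Since the union `U` of `𝓕` is itself a member,
there are at least `n + k (m - 1)` of them, where `m = |𝓕|`. On the other hand an abundant
element lies in at most `m` sets and any other element in at most `m / 2`, so there are at most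
`(n + f) m / 2`. Hence `f m ≥ (2k - n) m + 2 (n - k)`: for `k = n` this gives `f ≥ n`, and for
`k < n` it gives `f > 2k - n`.
-/

open Finset

theorem UnionClosed.sup_mem {F : Finset (Finset ℕ)} (hUC : UnionClosed F) (hF : F.Nonempty) :
    F.sup id ∈ F :=
  SupClosed.finsetSup_mem (s := (F : Set (Finset ℕ))) (fun A hA B hB => hUC A hA B hB) hF
    fun _ h => h

theorem Finset.sum_card_eq_sum_card_filter_mem_sup {α : Type*} [DecidableEq α]
    (F : Finset (Finset α)) : ∑ A ∈ F, #A = ∑ x ∈ F.sup id, #{A ∈ F | x ∈ A} := by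
  have hinter : ∀ A ∈ F, #A = #(F.sup id ∩ A) := fun A hA => by
    have hsub : A ⊆ F.sup id := le_sup (f := id) hA
    rw [inter_eq_right.2 hsub]
  rw [sum_congr rfl hinter]
  simp_rw [← filter_mem_eq_inter, card_eq_sum_ones, sum_filter]
  exact sum_comm

theorem Finset.add_mul_card_sub_one_le_sum {ι : Type*} [DecidableEq ι] {s : Finset ι}
    {g : ι → ℕ} {a : ι} (ha : a ∈ s) {k : ℕ} (hk : ∀ i ∈ s, k ≤ g i) : g a + k * (#s - 1) ≤ ∑ i ∈ s, g i := by
  rw [← add_sum_erase s g ha, ← card_erase_of_mem ha, mul_comm, ← smul_eq_mul]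
  exact Nat.add_le_add_left
    (card_nsmul_le_sum _ _ _ fun i hi => hk i (mem_of_mem_erase hi)) _

theorem two_mul_card_filter_mem_le (F : Finset (Finset ℕ)) (x : ℕ) :
    2 * #{A ∈ F | x ∈ A} ≤ #F + if Abundant F x then #F else 0 := by
  split_ifs with hx
  · have := card_filter_le F (x ∈ ·)
    omega
  · simpa [Abundant] using hx

theorem two_mul_sum_card_le (F : Finset (Finset ℕ)) :
    2 * ∑ A ∈ F, #A ≤ (#(F.sup id) + #{x ∈ F.sup id | Abundant F x}) * #F := by
  calc 2 * ∑ A ∈ F, #A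
      = ∑ x ∈ F.sup id, 2 * #{A ∈ F | x ∈ A} := by
        rw [sum_card_eq_sum_card_filter_mem_sup, mul_sum]
    _ ≤ ∑ x ∈ F.sup id, (#F + if Abundant F x then #F else 0) :=
        sum_le_sum fun x _ => two_mul_card_filter_mem_le F x
    _ = (#(F.sup id) + #{x ∈ F.sup id | Abundant F x}) * #F := by
        rw [sum_add_distrib, ← sum_filter, sum_const, sum_const, smul_eq_mul, smul_eq_mul,
          add_mul]

theorem le_min_of_two_mul_add_mul_le {k n f m : ℕ} (hkn : k ≤ n) (hm : 1 ≤ m)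
    (h : 2 * (n + k * (m - 1)) ≤ (n + f) * m) :
    min (n : ℤ) (2 * (k : ℤ) - (n : ℤ) + 1) ≤ f := by
  have hz : 2 * ((n : ℤ) + k * (m - 1)) ≤ (n + f) * m := by exact_mod_cast h
  rcases hkn.eq_or_lt with rfl | hlt
  · refine min_le_of_left_le ?_
    have hzm : (1 : ℤ) ≤ m := by exact_mod_cast hm
    nlinarith
  · refine min_le_of_right_le ?_
    have hz' : (k : ℤ) < n := by exact_mod_cast hlt
    nlinarith

theorem abundance_averaging_general (F : Finset (Finset ℕ)) (hF : F.Nonempty)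
    (hUC : UnionClosed F) (k n f : ℕ)
    (hk₂ : ∀ A ∈ F, k ≤ A.card)
    (hn : (F.sup id).card = n)
    (hf : ((F.sup id).filter (Abundant F)).card = f) :
    (f : ℤ) ≥ min (n : ℤ) (2 * (k : ℤ) - (n : ℤ) + 1) := by
  have hU : F.sup id ∈ F := hUC.sup_mem hF
  have hlower : n + k * (#F - 1) ≤ ∑ A ∈ F, #A := hn ▸ add_mul_card_sub_one_le_sum hU hk₂
  have hupper : 2 * ∑ A ∈ F, #A ≤ (n + f) * #F := hn ▸ hf ▸ two_mul_sum_card_le F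
  exact le_min_of_two_mul_add_mul_le (hn ▸ hk₂ _ hU) hF.card_pos (by omega)

theorem abundance_averaging (F : Finset (Finset ℕ)) (hF : F.Nonempty)
    (hUC : UnionClosed F) (hE : (∅ : Finset ℕ) ∉ F) (k n f : ℕ)
    (hk₁ : ∃ S ∈ F, S.card = k) (hk₂ : ∀ A ∈ F, k ≤ A.card)
    (hn : (F.sup id).card = n)
    (hf : ((F.sup id).filter (Abundant F)).card = f) :
    (f : ℤ) ≥ min (n : ℤ) (2 * (k : ℤ) - (n : ℤ) + 1) :=
  abundance_averaging_general F hF hUC k n f hk₂ hn hf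
end

section
/- There exists a twin-free (2,3,8)-construction 𝓕 (a finite union-closed family of finite sets with exactly 2 abundant elements, smallest set of size 3, and largest set of size 8) such that moreover every non-abundant element of the largest set of 𝓕 belongs to strictly less than half of the sets of 𝓕, i.e. 2·|{A ∈ 𝓕 : x ∈ A}| < |𝓕| for every non-abundant element x. -/
/-!
The family consists of the sets `{0,1} ∪ S` for the 63 nonempty `S ⊆ {2,…,7}`, together with
`{0} ∪ S` and `{1} ∪ S` for the sets `S` of size at least 2 inside `{2,3,4}` and `{5,6,7}`
respectively. Two of its sets with different markers have a union containing both 0 and 1, which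
is again in the first block, so the family is union-closed. Of its 71 sets, 0 and 1 each lie in 67,
while every `x ∈ {2,…,7}` lies in only 32 + 3 = 35.
-/

open Finset

def subsetsOfCardGE {α : Type*} (U : Finset α) (k : ℕ) : Finset (Finset α) :=
  U.powerset.filter fun S => k ≤ S.card

theorem subsetsOfCardGE_mono {α : Type*} {U V : Finset α} {k l : ℕ} (hUV : U ⊆ V)
    (hlk : l ≤ k) : subsetsOfCardGE U k ⊆ subsetsOfCardGE V l := by
  intro S hS
  simp only [subsetsOfCardGE, mem_filter, mem_powerset] at *
  exact ⟨hS.1.trans hUV, hlk.trans hS.2⟩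

theorem unionClosed_subsetsOfCardGE (U : Finset ℕ) (k : ℕ) :
    UnionClosed (subsetsOfCardGE U k) := by
  intro A hA B hB
  simp only [subsetsOfCardGE, mem_filter, mem_powerset] at *
  exact ⟨union_subset hA.1 hB.1, hA.2.trans (card_le_card subset_union_left)⟩

def glue (a b : ℕ) (P G₀ G₁ : Finset (Finset ℕ)) : Finset (Finset ℕ) :=
  P.image (insert a ∘ insert b) ∪ G₀.image (insert a) ∪ G₁.image (insert b)

theorem UnionClosed.glue {P G₀ G₁ : Finset (Finset ℕ)} (hP : UnionClosed P)
    (hG₀ : UnionClosed G₀) (hG₁ : UnionClosed G₁) (hG₀P : G₀ ⊆ P) (hG₁P : G₁ ⊆ P) (a b : ℕ) :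
    UnionClosed (glue a b P G₀ G₁) := by
  have mem_P {S : Finset ℕ} (hS : S ∈ P ∨ S ∈ G₀ ∨ S ∈ G₁) : S ∈ P := by
    rcases hS with hS | hS | hS
    exacts [hS, hG₀P hS, hG₁P hS]
  intro A hA B hB
  simp only [_root_.glue, mem_union, mem_image, Function.comp_apply] at *
  rcases hA with (⟨S, hS, rfl⟩ | ⟨S, hS, rfl⟩) | ⟨S, hS, rfl⟩ <;>
    rcases hB with (⟨T, hT, rfl⟩ | ⟨T, hT, rfl⟩) | ⟨T, hT, rfl⟩
  all_goals first
    | refine Or.inl (Or.inr ⟨S ∪ T, hG₀ S hS T hT, ?_⟩)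
    | refine Or.inr ⟨S ∪ T, hG₁ S hS T hT, ?_⟩
    | refine Or.inl (Or.inl ⟨S ∪ T, hP S (mem_P (by tauto)) T (mem_P (by tauto)), ?_⟩)
  all_goals ext; simp only [mem_insert, mem_union]; tauto

def family : Finset (Finset ℕ) :=
  glue 0 1 (subsetsOfCardGE {2, 3, 4, 5, 6, 7} 1) (subsetsOfCardGE {2, 3, 4} 2)
    (subsetsOfCardGE {5, 6, 7} 2)

theorem unionClosed_family : UnionClosed family :=
  (unionClosed_subsetsOfCardGE _ _).glue (unionClosed_subsetsOfCardGE _ _)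
    (unionClosed_subsetsOfCardGE _ _) (subsetsOfCardGE_mono (by decide) (by norm_num))
    (subsetsOfCardGE_mono (by decide) (by norm_num)) 0 1

set_option maxRecDepth 100000

theorem card_family : family.card = 71 := by decide

theorem sup_family : family.sup id = range 8 := by decide

theorem card_filter_mem_family : ∀ x ∈ range 8,
    (family.filter (x ∈ ·)).card = if x < 2 then 67 else 35 := by decide

theorem three_le_card_of_mem_family : ∀ A ∈ family, 3 ≤ A.card := by decide

theorem twinFree_family : TwinFree family := by
  unfold TwinFree; decide

theorem abundant_family_iff {x : ℕ} (hx : x ∈ range 8) : Abundant family x ↔ x < 2 := by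
  unfold Abundant
  rw [card_filter_mem_family x hx, card_family]
  split_ifs <;> omega

theorem exists_238_construction :
    ∃ F : Finset (Finset ℕ), IsConstruction F 2 3 8 ∧ TwinFree F ∧
      ∀ x ∈ F.sup id, ¬ Abundant F x →
        2 * (F.filter (fun A => x ∈ A)).card < F.card := by
  have mem_023 : {0, 2, 3} ∈ family := by decide
  refine ⟨family, ⟨⟨_, mem_023⟩, unionClosed_family, ?_, ⟨_, mem_023, rfl⟩,
    three_le_card_of_mem_family, ?_⟩, twinFree_family, ?_⟩
  · rw [sup_family, filter_congr fun x hx => abundant_family_iff hx]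
    rfl
  · rw [sup_family, card_range]
  · intro x hx hna
    rw [sup_family] at hx
    have hx_ge : ¬ x < 2 := mt (abundant_family_iff hx).2 hna
    rw [card_filter_mem_family x hx, if_neg hx_ge, card_family]
    norm_num
end

section
/- There exists a twin-free (3,4,9)-construction 𝓕 (a finite union-closed family of finite sets with exactly 3 abundant elements, smallest set of size 4, and largest set of size 9) such that moreover every non-abundant element of the largest set of 𝓕 belongs to strictly less than half of the sets of 𝓕, i.e. 2·|{A ∈ 𝓕 : x ∈ A}| < |𝓕| for every non-abundant element x. -/
/-!
The family lives on `{0, …, 8}`. Its bulk is the interval `Ioc {0,1,2} {0,…,8}`: all 63 proper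
supersets of the core `{0,1,2}`, in which every element outside the core lies in 32 sets. Eight
separator sets `{0,1} ∪ X` (`X` a union of edges of the triangle `{3,4,5}`) and `{0,2} ∪ Y`
(`Y` likewise on `{6,7,8}`) bring the total to 71 while each of `3, …, 8` gains only 3 more sets,
so it ends in 35 < 71/2 sets, whereas `0, 1, 2` lie in 71, 67, 67 sets. The separators have four
or five elements and split every pair of elements. The family is union-closed because a union
with a proper superset of the core is again one, and so is a union of separators from different
triangles.
-/

theorem sup_mem_Ioc_of_mem_of_le {α : Type*} [Lattice α] [LocallyFiniteOrder α] {a b c u : α}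
    (ha : a ∈ Finset.Ioc c u) (hb : b ≤ u) : a ⊔ b ∈ Finset.Ioc c u := by
  rw [Finset.mem_Ioc] at ha ⊢
  exact ⟨ha.1.trans_le le_sup_left, sup_le ha.2 hb⟩

theorem unionClosed_Ioc_union {C U : Finset ℕ} {𝒮 : Finset (Finset ℕ)}
    (hU : ∀ A ∈ 𝒮, A ⊆ U) (h𝒮 : ∀ A ∈ 𝒮, ∀ B ∈ 𝒮, A ∪ B ∈ 𝒮 ∨ C ⊂ A ∪ B) :
    UnionClosed (Finset.Ioc C U ∪ 𝒮) := by
  have hsub : ∀ A ∈ Finset.Ioc C U ∪ 𝒮, A ⊆ U := by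
    intro A hA
    rcases Finset.mem_union.mp hA with hA | hA
    · exact (Finset.mem_Ioc.mp hA).2
    · exact hU A hA
  intro A hA B hB
  rw [Finset.mem_union] at hA hB ⊢
  rcases hA with hA | hA
  · exact .inl (sup_mem_Ioc_of_mem_of_le hA (hsub B (Finset.mem_union.mpr hB)))
  rcases hB with hB | hB
  · rw [Finset.union_comm]
    exact .inl (sup_mem_Ioc_of_mem_of_le hB (hU A hA))
  rcases h𝒮 A hA B hB with h | h
  · exact .inr h
  · exact .inl (Finset.mem_Ioc.mpr ⟨h, Finset.union_subset (hU A hA) (hU B hB)⟩)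

def separators : Finset (Finset ℕ) :=
  {{0, 1, 3, 4}, {0, 1, 4, 5}, {0, 1, 3, 5}, {0, 1, 3, 4, 5},
   {0, 2, 6, 7}, {0, 2, 7, 8}, {0, 2, 6, 8}, {0, 2, 6, 7, 8}}

def family349 : Finset (Finset ℕ) := Finset.Ioc {0, 1, 2} (Finset.range 9) ∪ separators

theorem unionClosed_family349 : UnionClosed family349 :=
  unionClosed_Ioc_union (by decide) (by decide)

set_option maxRecDepth 100000 in
theorem exists_349_construction :
    ∃ F : Finset (Finset ℕ), IsConstruction F 3 4 9 ∧ TwinFree F ∧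
      ∀ x ∈ F.sup id, ¬ Abundant F x →
        2 * (F.filter (fun A => x ∈ A)).card < F.card := by
  refine ⟨family349, ⟨by decide, unionClosed_family349, by decide, by decide, by decide, by decide⟩,
    ?_, by decide⟩
  unfold TwinFree
  decide
end

section
/- There exists a twin-free (4,5,9)-construction, i.e. a finite twin-free union-closed family of finite sets with exactly 4 abundant elements, whose smallest set has size 5 and whose largest set has size 9. -/
def family459 : Finset (Finset ℕ) :=
  (({5, 6, 7, 8, 9} : Finset ℕ).powerset.erase ∅).image ({1, 2, 3, 4} ∪ ·) ∪
  (({5, 6, 7} : Finset ℕ).powerset.filter (2 ≤ ·.card)).image ({1, 2, 3} ∪ ·) ∪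
  ({1, 2, 3} : Finset ℕ).biUnion fun i =>
    (({8, 9} : Finset ℕ).powerset.erase ∅).image
      fun Z => insert (i + 4) (({1, 2, 3, 4} : Finset ℕ).erase i ∪ Z)

theorem mem_family459 : ({1, 2, 3, 4, 5} : Finset ℕ) ∈ family459 := by decide +kernel

theorem five_le_card_of_mem_family459 : ∀ A ∈ family459, 5 ≤ A.card := by decide +kernel

theorem sup_family459 : family459.sup id = {1, 2, 3, 4, 5, 6, 7, 8, 9} := by decide +kernel

theorem filter_abundant_family459 :
    (family459.sup id).filter (Abundant family459) = {1, 2, 3, 4} := by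
  decide +kernel

theorem unionClosed_family459 : UnionClosed family459 := by
  unfold UnionClosed
  decide +kernel

theorem twinFree_family459 : TwinFree family459 := by
  unfold TwinFree
  decide +kernel

theorem exists_459_construction :
    ∃ F : Finset (Finset ℕ), IsConstruction F 4 5 9 ∧ TwinFree F := by
  refine ⟨family459, ⟨⟨_, mem_family459⟩, unionClosed_family459, ?_, ⟨_, mem_family459, rfl⟩,
    five_le_card_of_mem_family459, ?_⟩, twinFree_family459⟩
  · rw [filter_abundant_family459]
    rfl
  · rw [sup_family459]
    rfl
end

section
/- Let k and n be integers with n ≥ k ≥ 3 such that ∑_{i=k-1}^{⌊n/2⌋-1} C(⌊n/2⌋-1, i) > C(n-3, k-3) + C(⌊n/2⌋-2, k-2). Then there exists a twin-free (2,k,n)-construction, i.e. a finite twin-free union-closed family of finite sets with exactly 2 abundant elements, whose smallest set has size k and whose largest set has size n. -/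
open Finset

namespace Finset
variable {α : Type*} [DecidableEq α]

theorem card_filter_powersetCard_subset_le (s t : Finset α) (n : ℕ) :
    #((t.powersetCard n).filter (s ⊆ ·)) ≤ (#t - #s).choose (n - #s) := by
  by_cases h : s ⊆ t ∧ #s ≤ n
  · exact (card_filter_powersetCard_subset s t n h.1 h.2).le
  · rw [filter_false_of_mem fun u hu hsu => h ⟨hsu.trans (mem_powersetCard.1 hu).1,
      (card_le_card hsu).trans (mem_powersetCard.1 hu).2.le⟩, card_empty]
    exact Nat.zero_le _

theorem card_filter_powerset_mem_and_le_card {s : Finset α} {a : α} {k : ℕ} (ha : a ∈ s)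
    (hk : 1 ≤ k) :
    #(s.powerset.filter fun A => a ∈ A ∧ k ≤ #A) =
      ∑ i ∈ Icc (k - 1) (#s - 1), (#s - 1).choose i := by
  rw [card_eq_sum_card_fiberwise (f := fun A => #A - 1) (t := Icc (k - 1) (#s - 1))]
  · refine sum_congr rfl fun i hi => ?_
    have hfib : (s.powerset.filter fun A => a ∈ A ∧ k ≤ #A).filter (fun A => #A - 1 = i) =
        (s.powersetCard (i + 1)).filter ({a} ⊆ ·) := by
      ext A
      simp only [mem_filter, mem_powerset, mem_powersetCard, singleton_subset_iff, mem_Icc] at hi ⊢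
      constructor
      · rintro ⟨⟨hAs, haA, hkA⟩, rfl⟩
        exact ⟨⟨hAs, by omega⟩, haA⟩
      · rintro ⟨⟨hAs, hA⟩, haA⟩
        exact ⟨⟨hAs, haA, by omega⟩, by omega⟩
    rw [hfib, card_filter_powersetCard_subset _ _ _ (singleton_subset_iff.2 ha) (by simp),
      card_singleton, Nat.add_sub_cancel]
  · intro A hA
    simp only [coe_filter, mem_powerset, Set.mem_ofPred_eq] at hA
    have := card_le_card hA.1
    simp only [coe_Icc, Set.mem_Icc]
    omega

theorem card_inter_pair_eq_one {A : Finset α} {c d : α} (hc : c ∈ A) (hd : d ∉ A) :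
    #(A ∩ {c, d}) = 1 := by
  rw [inter_insert_of_mem hc, inter_singleton_of_notMem hd, insert_empty, card_singleton]

end Finset

theorem abundant_of_insert_mem {F : Finset (Finset ℕ)} {a : ℕ} {W : Finset ℕ}
    (hins : ∀ S ∈ F, insert a S ∈ F) (hW : W ∈ F) (haW : a ∈ W) (hWa : W.erase a ∉ F) :
    Abundant F a := by
  have hmaps : (F.filter (a ∉ ·)).image (insert a) ⊆ (F.filter (a ∈ ·)).erase W := by
    intro B hB
    obtain ⟨S, hS, rfl⟩ := mem_image.1 hB
    obtain ⟨hSF, haS⟩ := mem_filter.1 hS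
    refine mem_erase.2 ⟨fun hSW => hWa ?_, mem_filter.2 ⟨hins S hSF, mem_insert_self a S⟩⟩
    rwa [← hSW, erase_insert haS]
  have hinj : Set.InjOn (insert a) (F.filter (a ∉ ·) : Set (Finset ℕ)) := fun S hS T hT hST => by
    simp only [coe_filter, Set.mem_ofPred_eq] at hS hT
    rw [← erase_insert hS.2, ← erase_insert hT.2, hST]
  have hle := card_le_card hmaps
  rw [card_image_of_injOn hinj, card_erase_of_mem (mem_filter.2 ⟨hW, haW⟩)] at hle
  have hpos : 0 < #(F.filter (a ∈ ·)) := card_pos.2 ⟨W, mem_filter.2 ⟨hW, haW⟩⟩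
  have hsplit := card_filter_add_card_filter_not (s := F) (a ∈ ·)
  unfold Abundant
  omega

def twoHalvesFamily (V L R : Finset ℕ) (a b k : ℕ) : Finset (Finset ℕ) :=
  V.powerset.filter fun S => k ≤ #S ∧ (a ∈ S ∧ S ⊆ L ∨ b ∈ S ∧ S ⊆ R ∨ a ∈ S ∧ b ∈ S)

section TwoHalvesFamily

variable {V L R S : Finset ℕ} {a b k x : ℕ}

theorem mem_twoHalvesFamily : S ∈ twoHalvesFamily V L R a b k ↔
    S ⊆ V ∧ k ≤ #S ∧ (a ∈ S ∧ S ⊆ L ∨ b ∈ S ∧ S ⊆ R ∨ a ∈ S ∧ b ∈ S) := by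
  simp only [twoHalvesFamily, mem_filter, mem_powerset]

theorem twoHalvesFamily_comm : twoHalvesFamily V L R a b k = twoHalvesFamily V R L b a k := by
  ext S
  simp only [mem_twoHalvesFamily]
  tauto

theorem unionClosed_twoHalvesFamily : UnionClosed (twoHalvesFamily V L R a b k) := by
  intro A hA B hB
  rw [mem_twoHalvesFamily] at hA hB ⊢
  obtain ⟨hAV, hkA, hA⟩ := hA
  obtain ⟨hBV, -, hB⟩ := hB
  refine ⟨union_subset hAV hBV, hkA.trans (card_le_card subset_union_left), ?_⟩
  simp only [mem_union, union_subset_iff]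
  tauto

theorem insert_mem_twoHalvesFamily (ha : a ∈ V) (hS : S ∈ twoHalvesFamily V L R a b k) :
    insert a S ∈ twoHalvesFamily V L R a b k := by
  by_cases haS : a ∈ S
  · rwa [insert_eq_of_mem haS]
  obtain ⟨hSV, hkS, hS⟩ := mem_twoHalvesFamily.1 hS
  have hbS : b ∈ S := by tauto
  exact mem_twoHalvesFamily.2 ⟨insert_subset ha hSV, hkS.trans (card_le_card (subset_insert a S)),
    Or.inr (Or.inr ⟨mem_insert_self a S, mem_insert_of_mem hbS⟩)⟩

theorem erase_mem_twoHalvesFamily (hxa : x ≠ a) (hxb : x ≠ b)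
    (hS : S ∈ twoHalvesFamily V L R a b k) (hkS : k < #S) :
    S.erase x ∈ twoHalvesFamily V L R a b k := by
  obtain ⟨hSV, -, hS⟩ := mem_twoHalvesFamily.1 hS
  refine mem_twoHalvesFamily.2 ⟨(erase_subset x S).trans hSV, ?_, ?_⟩
  · have := pred_card_le_card_erase (s := S) (a := x)
    omega
  · have hsub : S.erase x ⊆ S := erase_subset x S
    simp only [mem_erase, ne_eq, Ne.symm hxa, Ne.symm hxb, not_false_eq_true, true_and]
    rcases hS with ⟨ha, hL⟩ | ⟨hb, hR⟩ | hab
    · exact Or.inl ⟨ha, hsub.trans hL⟩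
    · exact Or.inr (Or.inl ⟨hb, hsub.trans hR⟩)
    · exact Or.inr (Or.inr hab)

theorem exists_card_eq_mem_twoHalvesFamily (hLV : L ⊆ V) (haL : a ∈ L) (hk : 1 ≤ k)
    (hkL : k ≤ #L) : ∃ W ∈ twoHalvesFamily V L R a b k, a ∈ W ∧ #W = k := by
  obtain ⟨W, haW, hWL, hW⟩ :=
    exists_subsuperset_card_eq (singleton_subset_iff.2 haL) (by simpa using hk) hkL
  have haW := singleton_subset_iff.1 haW
  exact ⟨W, mem_twoHalvesFamily.2 ⟨hWL.trans hLV, hW.ge, Or.inl ⟨haW, hWL⟩⟩, haW, hW⟩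

theorem abundant_twoHalvesFamily (hLV : L ⊆ V) (haL : a ∈ L) (hk : 1 ≤ k) (hkL : k ≤ #L) :
    Abundant (twoHalvesFamily V L R a b k) a := by
  obtain ⟨W, hW, haW, hWk⟩ := exists_card_eq_mem_twoHalvesFamily (R := R) (b := b) hLV haL hk hkL
  refine abundant_of_insert_mem (fun S => insert_mem_twoHalvesFamily (hLV haL)) hW haW
    fun hWa => ?_
  have := (mem_twoHalvesFamily.1 hWa).2.1
  rw [card_erase_of_mem haW] at this
  omega

theorem card_filter_notMem_twoHalvesFamily (hRV : R ⊆ V) (haR : a ∉ R) (hbR : b ∈ R)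
    (hk : 1 ≤ k) :
    #((twoHalvesFamily V L R a b k).filter (a ∉ ·)) =
      ∑ i ∈ Icc (k - 1) (#R - 1), (#R - 1).choose i := by
  rw [← card_filter_powerset_mem_and_le_card hbR hk]
  congr 1
  ext S
  simp only [mem_filter, mem_twoHalvesFamily, mem_powerset]
  constructor
  · rintro ⟨⟨-, hkS, hS⟩, haS⟩
    have : b ∈ S ∧ S ⊆ R := by tauto
    exact ⟨this.2, this.1, hkS⟩
  · rintro ⟨hSR, hbS, hkS⟩
    exact ⟨⟨hSR.trans hRV, hkS, Or.inr (Or.inl ⟨hbS, hSR⟩)⟩, fun haS => haR (hSR haS)⟩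

theorem card_filter_mem_card_eq_twoHalvesFamily_le (hxR : x ∉ R) (hxa : x ≠ a) (hxb : x ≠ b)
    (hab : a ≠ b) :
    #((twoHalvesFamily V L R a b k).filter fun S => x ∈ S ∧ #S = k) ≤
      (#V - 3).choose (k - 3) + (#L - 2).choose (k - 2) := by
  have hsub : (twoHalvesFamily V L R a b k).filter (fun S => x ∈ S ∧ #S = k) ⊆
      (V.powersetCard k).filter ({a, b, x} ⊆ ·) ∪ (L.powersetCard k).filter ({a, x} ⊆ ·) := by
    intro S hS
    obtain ⟨hSF, hxS, hSk⟩ := mem_filter.1 hS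
    obtain ⟨hSV, -, hS⟩ := mem_twoHalvesFamily.1 hSF
    simp only [mem_union, mem_filter, mem_powersetCard, insert_subset_iff,
      singleton_subset_iff]
    rcases hS with ⟨ha, hL⟩ | ⟨-, hR⟩ | ⟨ha, hb⟩
    · exact Or.inr ⟨⟨hL, hSk⟩, ha, hxS⟩
    · exact absurd (hR hxS) hxR
    · exact Or.inl ⟨⟨hSV, hSk⟩, ha, hb, hxS⟩
  have habx : #({a, b, x} : Finset ℕ) = 3 := by
    rw [card_insert_of_notMem (by simp [hab, hxa.symm]), card_pair hxb.symm]
  calc _ ≤ _ := card_le_card hsub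
    _ ≤ _ := card_union_le _ _
    _ ≤ _ := by
      gcongr
      · simpa only [habx] using card_filter_powersetCard_subset_le {a, b, x} V k
      · simpa only [card_pair hxa.symm] using card_filter_powersetCard_subset_le {a, x} L k

theorem card_filter_mem_add_card_filter_notMem_twoHalvesFamily_le (hxR : x ∉ R) (hxa : x ≠ a)
    (hxb : x ≠ b) :
    #((twoHalvesFamily V L R a b k).filter (x ∈ ·)) +
        #((twoHalvesFamily V L R a b k).filter (a ∉ ·)) ≤
      #((twoHalvesFamily V L R a b k).filter (x ∉ ·)) +
        #((twoHalvesFamily V L R a b k).filter fun S => x ∈ S ∧ #S = k) := by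
  set F := twoHalvesFamily V L R a b k
  have hlarge : ((F.filter (x ∈ ·)).filter (k < #·)).image (·.erase x) ⊆
      (F.filter (x ∉ ·)).filter (a ∈ ·) := by
    intro T hT
    obtain ⟨S, hS, rfl⟩ := mem_image.1 hT
    simp only [mem_filter] at hS
    obtain ⟨⟨hSF, hxS⟩, hkS⟩ := hS
    refine mem_filter.2 ⟨mem_filter.2 ⟨erase_mem_twoHalvesFamily hxa hxb hSF hkS,
      notMem_erase x S⟩, mem_erase.2 ⟨hxa.symm, ?_⟩⟩
    obtain ⟨-, -, hS⟩ := mem_twoHalvesFamily.1 hSF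
    rcases hS with ⟨ha, -⟩ | ⟨-, hR⟩ | ⟨ha, -⟩
    exacts [ha, absurd (hR hxS) hxR, ha]
  have hinj : Set.InjOn (·.erase x) ((F.filter (x ∈ ·)).filter (k < #·) : Set (Finset ℕ)) :=
    fun S hS T hT hST => by
      simp only [coe_filter, mem_filter, Set.mem_ofPred_eq] at hS hT
      rw [← insert_erase hS.1.2, ← insert_erase hT.1.2]
      exact congrArg (insert x) hST
  have hsmall : (F.filter (x ∈ ·)).filter (¬ k < #·) ⊆ F.filter fun S => x ∈ S ∧ #S = k := by
    intro S hS
    simp only [mem_filter, not_lt] at hS ⊢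
    exact ⟨hS.1.1, hS.1.2, le_antisymm hS.2 (mem_twoHalvesFamily.1 hS.1.1).2.1⟩
  have hpure : F.filter (a ∉ ·) ⊆ (F.filter (x ∉ ·)).filter (a ∉ ·) := by
    intro S hS
    obtain ⟨hSF, haS⟩ := mem_filter.1 hS
    obtain ⟨-, -, hS⟩ := mem_twoHalvesFamily.1 hSF
    have hSR : S ⊆ R := by tauto
    exact mem_filter.2 ⟨mem_filter.2 ⟨hSF, fun hxS => hxR (hSR hxS)⟩, haS⟩
  have h₁ := card_le_card hlarge
  rw [card_image_of_injOn hinj] at h₁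
  have h₂ := card_le_card hsmall
  have h₃ := card_le_card hpure
  have h₄ := card_filter_add_card_filter_not (s := F.filter (x ∈ ·)) (k < #·)
  have h₅ := card_filter_add_card_filter_not (s := F.filter (x ∉ ·)) (a ∈ ·)
  omega

theorem not_abundant_twoHalvesFamily (hRV : R ⊆ V) (haR : a ∉ R) (hbR : b ∈ R) (hk : 1 ≤ k)
    (hxR : x ∉ R) (hxa : x ≠ a)
    (hcount : (#V - 3).choose (k - 3) + (#L - 2).choose (k - 2) ≤
      ∑ i ∈ Icc (k - 1) (#R - 1), (#R - 1).choose i) :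
    ¬ Abundant (twoHalvesFamily V L R a b k) x := by
  have hxb : x ≠ b := fun h => hxR (h ▸ hbR)
  have hab : a ≠ b := fun h => haR (h ▸ hbR)
  have h₁ := card_filter_mem_add_card_filter_notMem_twoHalvesFamily_le (V := V) (L := L) (k := k)
    hxR hxa hxb
  rw [card_filter_notMem_twoHalvesFamily hRV haR hbR hk] at h₁
  have h₂ := card_filter_mem_card_eq_twoHalvesFamily_le (V := V) (L := L) (k := k) hxR hxa hxb hab
  have h₃ := card_filter_add_card_filter_not (s := twoHalvesFamily V L R a b k) (x ∈ ·)
  unfold Abundant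
  omega

theorem twinFree_twoHalvesFamily (hLV : L ⊆ V) (haL : a ∈ L) (hbL : b ∉ L) (hbV : b ∈ V)
    (hkL : k ≤ #L) (hkV : k < #V) : TwinFree (twoHalvesFamily V L R a b k) := by
  have hVF : V ∈ twoHalvesFamily V L R a b k :=
    mem_twoHalvesFamily.2 ⟨Subset.rfl, hkV.le, Or.inr (Or.inr ⟨hLV haL, hbV⟩)⟩
  have hsep : ∀ c ∈ V, ∀ d ∈ V, c ≠ d → c ≠ a → c ≠ b →
      ∃ A ∈ twoHalvesFamily V L R a b k, #(A ∩ {c, d}) = 1 := by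
    intro c _ d hd hcd hca hcb
    refine ⟨V.erase c, erase_mem_twoHalvesFamily hca hcb hVF hkV, ?_⟩
    rw [pair_comm]
    exact card_inter_pair_eq_one (mem_erase.2 ⟨hcd.symm, hd⟩) (notMem_erase c V)
  have hsupV : (twoHalvesFamily V L R a b k).sup id ⊆ V :=
    Finset.sup_le fun S hS => (mem_twoHalvesFamily.1 hS).1
  intro c hc d hd hcd
  replace hc := hsupV hc
  replace hd := hsupV hd
  by_cases hc' : c ≠ a ∧ c ≠ b
  · exact hsep c hc d hd hcd hc'.1 hc'.2
  by_cases hd' : d ≠ a ∧ d ≠ b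
  · rw [pair_comm]
    exact hsep d hd c hc hcd.symm hd'.1 hd'.2
  have hLF : L ∈ twoHalvesFamily V L R a b k :=
    mem_twoHalvesFamily.2 ⟨hLV, hkL, Or.inl ⟨haL, Subset.rfl⟩⟩
  refine ⟨L, hLF, ?_⟩
  obtain ⟨rfl, rfl⟩ | ⟨rfl, rfl⟩ : c = a ∧ d = b ∨ c = b ∧ d = a := by omega
  · exact card_inter_pair_eq_one haL hbL
  · rw [pair_comm]
    exact card_inter_pair_eq_one haL hbL

theorem filter_abundant_twoHalvesFamily {m : ℕ} (hLV : L ⊆ V) (hRV : R ⊆ V)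
    (hLR : Disjoint L R) (haL : a ∈ L) (hbR : b ∈ R) (hL : #L = m) (hR : #R = m) (hk : 1 ≤ k)
    (hkm : k ≤ m) (hcount : (#V - 3).choose (k - 3) + (m - 2).choose (k - 2) ≤
      ∑ i ∈ Icc (k - 1) (m - 1), (m - 1).choose i) :
    V.filter (Abundant (twoHalvesFamily V L R a b k)) = {a, b} := by
  subst hL
  ext x
  simp only [mem_filter, mem_insert, mem_singleton]
  constructor
  · rintro ⟨-, hx⟩
    by_contra! hxab
    by_cases hxR : x ∈ R
    · rw [twoHalvesFamily_comm] at hx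
      exact not_abundant_twoHalvesFamily hLV (disjoint_right.1 hLR hbR) haL hk
        (disjoint_right.1 hLR hxR) hxab.2 (hR ▸ hcount) hx
    · exact not_abundant_twoHalvesFamily hRV (disjoint_left.1 hLR haL) hbR hk hxR hxab.1
        (hR ▸ hcount) hx
  · rintro (rfl | rfl)
    · exact ⟨hLV haL, abundant_twoHalvesFamily hLV haL hk hkm⟩
    · rw [twoHalvesFamily_comm]
      exact ⟨hRV hbR, abundant_twoHalvesFamily hRV hbR hk (hR ▸ hkm)⟩

theorem isConstruction_twoHalvesFamily {m : ℕ} (hLV : L ⊆ V) (hRV : R ⊆ V)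
    (hLR : Disjoint L R) (haL : a ∈ L) (hbR : b ∈ R) (hL : #L = m) (hR : #R = m) (hk : 1 ≤ k)
    (hkm : k ≤ m) (hcount : (#V - 3).choose (k - 3) + (m - 2).choose (k - 2) ≤
      ∑ i ∈ Icc (k - 1) (m - 1), (m - 1).choose i) :
    IsConstruction (twoHalvesFamily V L R a b k) 2 k #V ∧
      TwinFree (twoHalvesFamily V L R a b k) := by
  have hkV : k < #V := by
    have := card_le_card (union_subset hLV hRV)
    rw [card_union_of_disjoint hLR] at this
    omega
  have hVF : V ∈ twoHalvesFamily V L R a b k :=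
    mem_twoHalvesFamily.2 ⟨Subset.rfl, hkV.le, Or.inr (Or.inr ⟨hLV haL, hRV hbR⟩)⟩
  have hsup : (twoHalvesFamily V L R a b k).sup id = V :=
    le_antisymm (Finset.sup_le fun S hS => (mem_twoHalvesFamily.1 hS).1) (le_sup (f := id) hVF)
  obtain ⟨W, hW, -, hWk⟩ := exists_card_eq_mem_twoHalvesFamily (R := R) (b := b) hLV haL hk
    (hL ▸ hkm)
  have hab : a ≠ b := fun h => disjoint_left.1 hLR haL (h ▸ hbR)
  refine ⟨⟨⟨V, hVF⟩, unionClosed_twoHalvesFamily, ?_, ⟨W, hW, hWk⟩,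
    fun A hA => (mem_twoHalvesFamily.1 hA).2.1, by rw [hsup]⟩,
    twinFree_twoHalvesFamily hLV haL (disjoint_right.1 hLR hbR) (hRV hbR) (hL ▸ hkm) hkV⟩
  rw [hsup, filter_abundant_twoHalvesFamily hLV hRV hLR haL hbR hL hR hk hkm hcount,
    card_pair hab]

end TwoHalvesFamily

theorem exists_twinfree_2kn_construction_general (k n : ℕ) (hk : 3 ≤ k)
    (hineq : (Finset.Icc (k - 1) (n / 2 - 1)).sum (fun i => Nat.choose (n / 2 - 1) i)
      > Nat.choose (n - 3) (k - 3) + Nat.choose (n / 2 - 2) (k - 2)) :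
    ∃ F : Finset (Finset ℕ), IsConstruction F 2 k n ∧ TwinFree F := by
  have hkm : k ≤ n / 2 := by
    by_contra h
    rw [Icc_eq_empty (by omega), sum_empty] at hineq
    omega
  have h := isConstruction_twoHalvesFamily (V := range n) (L := range (n / 2))
    (R := Ico (n / 2) (2 * (n / 2))) (a := 0) (b := n / 2)
    (range_subset_range.2 (Nat.div_le_self n 2))
    (fun y hy => by simp only [mem_Ico, mem_range] at hy ⊢; omega)
    (disjoint_left.2 fun y hy hy' => by simp only [mem_Ico, mem_range] at hy hy'; omega)
    (mem_range.2 (by omega)) (mem_Ico.2 (by omega)) (card_range _) (by rw [Nat.card_Ico]; omega)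
    (by omega) hkm (by rw [card_range]; exact hineq.le)
  rw [card_range] at h
  exact ⟨_, h⟩

theorem exists_twinfree_2kn_construction (k n : ℕ) (hk : 3 ≤ k) (hkn : k ≤ n)
    (hineq : (Finset.Icc (k - 1) (n / 2 - 1)).sum (fun i => Nat.choose (n / 2 - 1) i)
      > Nat.choose (n - 3) (k - 3) + Nat.choose (n / 2 - 2) (k - 2)) :
    ∃ F : Finset (Finset ℕ), IsConstruction F 2 k n ∧ TwinFree F :=
  exists_twinfree_2kn_construction_general k n hk hineq
end

section
/- For all integers k ≥ 0 and n with n ≥ max { 3, 5k − 4 }, there exists a (2,k,n)-construction, i.e. a finite union-closed family of finite sets with exactly 2 abundant elements, whose smallest set has size k and whose largest set has size n. -/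
/-!
Blowing up each point `i` of a union-closed family into a block of `s i ≥ 1` new points keeps
it union-closed, makes a point abundant exactly when its block's index is, and turns set sizes
into weighted sums. So it suffices to find small weighted families in which exactly two
indices, both of weight one, are abundant.

Write `a, b` for the indices `0, 1`. For `k ≤ 2` take the family `{L, {a, b}, {a, b, R}}`,
where `L` consists of the first `k` indices and `R` has weight `n - 2`. For `k ≥ 3` take the
indices `a, b, X, Y₁, Y₂, Z₁, Z₂` (that is, `0, …, 6`) with weights `1, 1, k - 2` and `k - 1`
for the rest, the slack `n - (5k - 4)` going to `Y₁`, and the family of all strict supersets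
of `{a, b}` together with the sets `{a} ∪ T`, `∅ ≠ T ⊆ {Y₁, Y₂}`, and `{b} ∪ T`,
`∅ ≠ T ⊆ {Z₁, Z₂}`. Of its 37 members, 34 contain `a` (and `b`), while each other index lies in
at most 18; its minimal members `{a, b, X}`, `{a, Yᵢ}`, `{b, Zᵢ}` all have weight at least `k`.
-/

open Finset

section BlowUp

variable {α : Type*}

def abundantIndices [DecidableEq α] (F : Finset (Finset α)) : Finset α :=
  (F.sup id).filter fun i => #F < 2 * #(F.filter (i ∈ ·))

variable {s : α → ℕ} (e : (Σ i, Fin (s i)) ↪ ℕ)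

def blowUp (A : Finset α) : Finset ℕ :=
  (A.sigma fun _ => univ).map e

variable {e}

lemma mem_blowUp {A : Finset α} {x : ℕ} :
    x ∈ blowUp e A ↔ ∃ p : Σ i, Fin (s i), p.1 ∈ A ∧ e p = x := by
  simp [blowUp]

lemma apply_mem_blowUp {A : Finset α} {p : Σ i, Fin (s i)} : e p ∈ blowUp e A ↔ p.1 ∈ A := by
  simp [blowUp]

lemma card_blowUp (A : Finset α) : #(blowUp e A) = ∑ i ∈ A, s i := by
  simp [blowUp]

lemma blowUp_injective (hs : ∀ i, 0 < s i) : Function.Injective (blowUp e) := by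
  intro A B h
  ext i
  simpa only [apply_mem_blowUp] using Eq.to_iff (congrArg (e ⟨i, ⟨0, hs i⟩⟩ ∈ ·) h)

variable [DecidableEq α]

lemma blowUp_union (A B : Finset α) : blowUp e (A ∪ B) = blowUp e A ∪ blowUp e B := by
  ext x
  simp only [mem_union, mem_blowUp, ← exists_or, ← or_and_right]

lemma sup_image_blowUp (F : Finset (Finset α)) :
    (F.image (blowUp e)).sup id = blowUp e (F.sup id) := by
  rw [sup_image, Function.id_comp]
  exact (apply_sup_eq_sup_comp (blowUp e) blowUp_union (by simp [blowUp])).symm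

lemma abundant_image_blowUp_apply (hs : ∀ i, 0 < s i) (F : Finset (Finset α))
    (p : Σ i, Fin (s i)) :
    Abundant (F.image (blowUp e)) (e p) ↔ #F < 2 * #(F.filter (p.1 ∈ ·)) := by
  have hinj := blowUp_injective (e := e) hs
  rw [Abundant, filter_image, card_image_of_injective _ hinj, card_image_of_injective _ hinj]
  simp only [apply_mem_blowUp, gt_iff_lt]

lemma filter_abundant_sup_image_blowUp (hs : ∀ i, 0 < s i) (F : Finset (Finset α)) :
    ((F.image (blowUp e)).sup id).filter (Abundant (F.image (blowUp e)))
      = blowUp e (abundantIndices F) := by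
  ext x
  simp only [mem_filter, sup_image_blowUp, abundantIndices, mem_blowUp]
  constructor
  · rintro ⟨⟨p, hp, rfl⟩, hab⟩
    exact ⟨p, ⟨hp, (abundant_image_blowUp_apply hs F p).1 hab⟩, rfl⟩
  · rintro ⟨p, ⟨hp, hab⟩, rfl⟩
    exact ⟨⟨p, hp, rfl⟩, (abundant_image_blowUp_apply hs F p).2 hab⟩

theorem isConstruction_image_blowUp (hs : ∀ i, 0 < s i) {F : Finset (Finset α)}
    (hne : F.Nonempty) (hF : ∀ A ∈ F, ∀ B ∈ F, A ∪ B ∈ F) {k : ℕ}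
    (hk : ∃ A ∈ F, ∑ i ∈ A, s i = k) (hmin : ∀ A ∈ F, k ≤ ∑ i ∈ A, s i) :
    IsConstruction (F.image (blowUp e)) (∑ i ∈ abundantIndices F, s i) k
      (∑ i ∈ F.sup id, s i) := by
  refine ⟨hne.image _, ?_, ?_, ?_, ?_, ?_⟩
  · simp only [UnionClosed, mem_image, forall_exists_index, and_imp]
    rintro _ A hA rfl _ B hB rfl
    exact ⟨A ∪ B, hF A hA B hB, blowUp_union A B⟩
  · rw [filter_abundant_sup_image_blowUp hs, card_blowUp]
  · obtain ⟨A, hA, rfl⟩ := hk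
    exact ⟨blowUp e A, mem_image_of_mem _ hA, card_blowUp A⟩
  · simp only [mem_image, forall_exists_index, and_imp]
    rintro _ A hA rfl
    simpa only [card_blowUp] using hmin A hA
  · rw [sup_image_blowUp, card_blowUp]

theorem exists_isConstruction_of_weights [Encodable α] (hs : ∀ i, 0 < s i)
    {F : Finset (Finset α)} (hne : F.Nonempty) (hF : ∀ A ∈ F, ∀ B ∈ F, A ∪ B ∈ F) {k : ℕ}
    (hk : ∃ A ∈ F, ∑ i ∈ A, s i = k) (hmin : ∀ A ∈ F, k ≤ ∑ i ∈ A, s i) :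
    ∃ G, IsConstruction G (∑ i ∈ abundantIndices F, s i) k (∑ i ∈ F.sup id, s i) :=
  ⟨_, isConstruction_image_blowUp (e := Encodable.encode' _) hs hne hF hk hmin⟩

end BlowUp

def smallFamily (k : ℕ) : Finset (Finset (Fin 3)) :=
  {univ.filter (fun i : Fin 3 => (i : ℕ) < k), {0, 1}, univ}

lemma smallFamily_unionClosed :
    ∀ k < 3, ∀ A ∈ smallFamily k, ∀ B ∈ smallFamily k, A ∪ B ∈ smallFamily k := by
  decide

lemma abundantIndices_smallFamily : ∀ k < 3, abundantIndices (smallFamily k) = {0, 1} := by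
  decide

lemma sup_smallFamily : ∀ k < 3, (smallFamily k).sup id = univ := by
  decide

lemma filter_lt_subset_of_mem_smallFamily :
    ∀ k < 3, ∀ A ∈ smallFamily k, univ.filter (fun i : Fin 3 => (i : ℕ) < k) ⊆ A := by
  decide

def largeFamily : Finset (Finset (Fin 7)) :=
  univ.filter fun A => {0, 1} ⊂ A ∨ ({0} ⊂ A ∧ A ⊆ {0, 3, 4}) ∨ ({1} ⊂ A ∧ A ⊆ {1, 5, 6})

set_option maxRecDepth 100000 in
lemma largeFamily_unionClosed : ∀ A ∈ largeFamily, ∀ B ∈ largeFamily, A ∪ B ∈ largeFamily := by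
  simp only [largeFamily, mem_filter, mem_univ, true_and]
  decide

set_option maxRecDepth 100000 in
lemma abundantIndices_largeFamily : abundantIndices largeFamily = {0, 1} := by
  decide

set_option maxRecDepth 100000 in
lemma sup_largeFamily : largeFamily.sup id = univ := by
  decide

set_option maxRecDepth 100000 in
lemma exists_minimal_subset_of_mem_largeFamily :
    ∀ A ∈ largeFamily,
      ∃ B ∈ ({{0, 1, 2}, {0, 3}, {0, 4}, {1, 5}, {1, 6}} : Finset (Finset (Fin 7))), B ⊆ A := by
  decide

theorem exists_construction_of_le_two {k n : ℕ} (hk : k ≤ 2) (hn : 3 ≤ n) :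
    ∃ F, IsConstruction F 2 k n := by
  set s : Fin 3 → ℕ := ![1, 1, n - 2]
  have hs : ∀ i, 0 < s i := by
    simp only [s, Fin.forall_fin_succ, Fin.isValue, Matrix.cons_val_zero, Matrix.cons_val_succ,
      Matrix.cons_val_fin_one, Order.lt_one_iff, tsub_pos_iff_lt, forall_const, true_and]
    omega
  have hlow : ∑ i ∈ univ.filter (fun i : Fin 3 => (i : ℕ) < k), s i = k := by
    rw [sum_filter, Fin.sum_univ_three]
    simp only [s, Fin.isValue, Fin.val_zero, Fin.val_one, Fin.val_two, Matrix.cons_val_zero,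
      Matrix.cons_val_one, Matrix.cons_val]
    split_ifs <;> omega
  obtain ⟨G, hG⟩ := exists_isConstruction_of_weights (F := smallFamily k) hs
    (insert_nonempty _ _) (smallFamily_unionClosed k (by omega)) ⟨_, mem_insert_self _ _, hlow⟩
    fun A hA => hlow ▸ sum_le_sum_of_subset
      (filter_lt_subset_of_mem_smallFamily k (by omega) A hA)
  rw [abundantIndices_smallFamily k (by omega), sup_smallFamily k (by omega)] at hG
  refine ⟨G, ?_⟩
  convert hG using 2
  · simp [s]
  · simp only [s, Fin.sum_univ_three, Fin.isValue, Matrix.cons_val_zero, Matrix.cons_val_one,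
      Matrix.cons_val]
    omega

theorem exists_construction_of_two_lt {k n : ℕ} (hk : 2 < k) (hn : 5 * k - 4 ≤ n) :
    ∃ F, IsConstruction F 2 k n := by
  set s : Fin 7 → ℕ := ![1, 1, k - 2, n - (4 * k - 3), k - 1, k - 1, k - 1]
  have hs : ∀ i, 0 < s i := by
    simp only [s, Fin.forall_fin_succ, Fin.isValue, Matrix.cons_val_zero, Matrix.cons_val_succ,
      Matrix.cons_val_fin_one, Order.lt_one_iff, tsub_pos_iff_lt, forall_const, and_self, true_and]
    omega
  have hmin : ∀ A ∈ largeFamily, k ≤ ∑ i ∈ A, s i := by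
    intro A hA
    obtain ⟨B, hB, hBA⟩ := exists_minimal_subset_of_mem_largeFamily A hA
    refine le_trans ?_ (sum_le_sum_of_subset hBA)
    simp only [mem_insert, mem_singleton] at hB
    rcases hB with rfl | rfl | rfl | rfl | rfl <;>
      simp only [s, mem_insert, mem_singleton, Fin.reduceEq, zero_ne_one, or_self,
        not_false_eq_true, sum_insert, sum_singleton, Fin.isValue, Matrix.cons_val_zero,
        Matrix.cons_val_one, Matrix.cons_val] <;> omega
  have hwit : ∑ i ∈ {0, 1, 2}, s i = k := by
    simp only [s, mem_insert, mem_singleton, Fin.reduceEq, zero_ne_one, or_self,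
      not_false_eq_true, sum_insert, sum_singleton, Fin.isValue, Matrix.cons_val_zero,
      Matrix.cons_val_one, Matrix.cons_val]
    omega
  obtain ⟨G, hG⟩ := exists_isConstruction_of_weights hs ⟨{0, 1, 2}, by decide⟩
    largeFamily_unionClosed ⟨{0, 1, 2}, by decide, hwit⟩ hmin
  rw [abundantIndices_largeFamily, sup_largeFamily] at hG
  refine ⟨G, ?_⟩
  convert hG using 2
  · simp [s]
  · simp only [s, Fin.sum_univ_seven, Fin.isValue, Matrix.cons_val_zero, Matrix.cons_val_one,
      Matrix.cons_val]
    omega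

theorem exists_2kn_construction (k n : ℕ) (hn : n ≥ max 3 (5 * k - 4)) :
    ∃ F : Finset (Finset ℕ), IsConstruction F 2 k n := by
  rcases le_or_gt k 2 with hk | hk
  · exact exists_construction_of_le_two hk (by omega)
  · exact exists_construction_of_two_lt hk (by omega)
end

section
/- If Conjecture P4 holds (for every finite nonempty twin-free union-closed family 𝓕 of finite sets with ∅ ∉ 𝓕 having exactly one abundant element x, 𝓕 consists of precisely all subsets of the largest set M of 𝓕 that contain x), then Conjecture P3 holds (for every finite nonempty union-closed family 𝓕 of finite sets with ∅ ∉ 𝓕 having exactly one abundant element x, x belongs to every set of 𝓕). -/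
/-!
Erasing one element of a pair of twins `c, d` with `d ≠ x` is a bijection of the family that
preserves union-closedness, the absence of `∅` and the number of sets containing any `y ≠ d`,
while `d` itself lies in no set any more. So a counterexample to P3 yields one with a smaller
universe, and by induction a twin-free one, where P4 applies.
-/

section Erase

variable {α : Type*} [DecidableEq α]

theorem card_inter_pair_eq_one_iff {a b : α} (hab : a ≠ b) (A : Finset α) :
    (A ∩ {a, b}).card = 1 ↔ ¬(a ∈ A ↔ b ∈ A) := by
  by_cases ha : a ∈ A <;> by_cases hb : b ∈ A <;>
    simp [Finset.inter_insert_of_mem, Finset.inter_insert_of_notMem,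
      Finset.inter_singleton_of_mem, Finset.inter_singleton_of_notMem, ha, hb, hab]

variable {F : Finset (Finset α)} {c d : α}

theorem injOn_erase_of_twins (hcd : c ≠ d) (htw : ∀ A ∈ F, (c ∈ A ↔ d ∈ A)) :
    Set.InjOn (Finset.erase · d) F := by
  intro A hA B hB hAB
  have hc : c ∈ A ↔ c ∈ B := by
    simpa [Finset.mem_erase, hcd] using congrArg (c ∈ ·) hAB
  ext y
  by_cases hy : y = d
  · subst hy
    rw [← htw A hA, ← htw B hB, hc]
  · simpa [Finset.mem_erase, hy] using congrArg (y ∈ ·) hAB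

theorem sup_image_erase (F : Finset (Finset α)) (d : α) :
    (F.image (Finset.erase · d)).sup id = (F.sup id).erase d := by
  ext y
  simp only [Finset.mem_sup, Finset.mem_image, Finset.mem_erase, id]
  constructor
  · rintro ⟨_, ⟨A, hA, rfl⟩, hy⟩
    exact ⟨(Finset.mem_erase.mp hy).1, A, hA, (Finset.mem_erase.mp hy).2⟩
  · rintro ⟨hyd, A, hA, hyA⟩
    exact ⟨A.erase d, ⟨A, hA, rfl⟩, Finset.mem_erase.mpr ⟨hyd, hyA⟩⟩

theorem empty_notMem_image_erase_of_twins (hcd : c ≠ d) (htw : ∀ A ∈ F, (c ∈ A ↔ d ∈ A))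
    (hempty : ∅ ∉ F) : ∅ ∉ F.image (Finset.erase · d) := by
  intro h
  obtain ⟨A, hA, hAd⟩ := Finset.mem_image.mp h
  have hc : c ∉ A := fun hc => by simpa [hAd] using Finset.mem_erase_of_ne_of_mem hcd hc
  rw [Finset.erase_eq_of_notMem (mt (htw A hA).mpr hc)] at hAd
  exact hempty (hAd ▸ hA)

theorem card_filter_mem_image_erase (hinj : Set.InjOn (Finset.erase · d) F) {y : α}
    (hy : y ≠ d) :
    ((F.image (Finset.erase · d)).filter (y ∈ ·)).card = (F.filter (y ∈ ·)).card := by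
  rw [Finset.filter_image, Finset.card_image_of_injOn <|
    hinj.mono <| Finset.coe_subset.mpr <| Finset.filter_subset _ _]
  congr 1
  exact Finset.filter_congr fun A _ => by simp [hy]

end Erase

theorem UnionClosed.image_erase {F : Finset (Finset ℕ)} (hUC : UnionClosed F) (d : ℕ) :
    UnionClosed (F.image (Finset.erase · d)) := by
  simp only [UnionClosed, Finset.forall_mem_image, ← Finset.erase_union_distrib]
  exact fun A hA B hB => Finset.mem_image_of_mem _ (hUC A hA B hB)

theorem abundant_image_erase_iff {F : Finset (Finset ℕ)} {d y : ℕ}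
    (hinj : Set.InjOn (Finset.erase · d) F) (hy : y ≠ d) :
    Abundant (F.image (Finset.erase · d)) y ↔ Abundant F y := by
  simp only [Abundant, card_filter_mem_image_erase hinj hy, Finset.card_image_of_injOn hinj]

theorem not_abundant_image_erase_self (F : Finset (Finset ℕ)) (d : ℕ) :
    ¬Abundant (F.image (Finset.erase · d)) d := by
  simp [Abundant, Finset.filter_image]

theorem exists_twins_ne_of_not_twinFree {F : Finset (Finset ℕ)} (htf : ¬TwinFree F) (x : ℕ) :
    ∃ c d, d ∈ F.sup id ∧ c ≠ d ∧ d ≠ x ∧ ∀ A ∈ F, (c ∈ A ↔ d ∈ A) := by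
  simp only [TwinFree, not_forall, not_exists, not_and] at htf
  obtain ⟨a, ha, b, hb, hab, htw⟩ := htf
  have htw : ∀ A ∈ F, (a ∈ A ↔ b ∈ A) := fun A hA => by
    simpa [card_inter_pair_eq_one_iff hab] using htw A hA
  by_cases hbx : b = x
  · exact ⟨b, a, ha, hab.symm, hbx ▸ hab, fun A hA => (htw A hA).symm⟩
  · exact ⟨a, b, hb, hab, hbx, htw⟩

theorem forall_mem_of_unique_abundant
    (twinFree_case : ∀ F : Finset (Finset ℕ), F.Nonempty → UnionClosed F → ∅ ∉ F →
      TwinFree F → ∀ x, Abundant F x → (∀ y, Abundant F y → y = x) →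
      ∀ A ∈ F, x ∈ A)
    (F : Finset (Finset ℕ)) (hne : F.Nonempty) (hUC : UnionClosed F) (hempty : ∅ ∉ F)
    (x : ℕ) (hx : Abundant F x) (hux : ∀ y, Abundant F y → y = x) : ∀ A ∈ F, x ∈ A := by
  induction hn : (F.sup id).card using Nat.strong_induction_on generalizing F with
  | _ n ih =>
  by_cases htf : TwinFree F
  · exact twinFree_case F hne hUC hempty htf x hx hux
  obtain ⟨c, d, hd, hcd, hdx, htw⟩ := exists_twins_ne_of_not_twinFree htf x
  set F' := F.image (Finset.erase · d)
  have hinj := injOn_erase_of_twins hcd htw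
  have hcard : (F'.sup id).card < n := by
    rw [sup_image_erase, Finset.card_erase_of_mem hd, ← hn]
    exact Nat.pred_lt (Finset.card_ne_zero_of_mem hd)
  have hx' : Abundant F' x := (abundant_image_erase_iff hinj hdx.symm).mpr hx
  have hux' : ∀ y, Abundant F' y → y = x := fun y hy => by
    have hyd : y ≠ d := by rintro rfl; exact not_abundant_image_erase_self F y hy
    exact hux y ((abundant_image_erase_iff hinj hyd).mp hy)
  intro A hA
  exact Finset.mem_of_mem_erase <| ih _ hcard F' (hne.image _) (hUC.image_erase d)
    (empty_notMem_image_erase_of_twins hcd htw hempty) hx' hux' rfl _ (Finset.mem_image_of_mem _ hA)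

theorem poonen4_implies_poonen3
    (P4 : ∀ F : Finset (Finset ℕ), F.Nonempty → UnionClosed F → (∅ : Finset ℕ) ∉ F →
      TwinFree F → ∀ x : ℕ, Abundant F x → (∀ y : ℕ, Abundant F y → y = x) →
      F = (F.sup id).powerset.filter (fun A => x ∈ A)) :
    ∀ F : Finset (Finset ℕ), F.Nonempty → UnionClosed F → (∅ : Finset ℕ) ∉ F →
      ∀ x : ℕ, Abundant F x → (∀ y : ℕ, Abundant F y → y = x) →
      ∀ A ∈ F, x ∈ A :=
  forall_mem_of_unique_abundant fun F hne hUC hempty htf x hx hux A hA => by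
    rw [P4 F hne hUC hempty htf x hx hux] at hA
    exact (Finset.mem_filter.mp hA).2
end

section
/- If Conjecture P3 holds (for every finite nonempty union-closed family 𝓕 of finite sets with ∅ ∉ 𝓕 having exactly one abundant element x, x belongs to every set of 𝓕), then Conjecture CH2 holds (every finite nonempty union-closed family of finite sets whose smallest set has size at least 2 has at least two abundant elements). -/
/-!
If a union-closed family `F ∌ ∅` had no abundant element, adjoin a fresh element `z` together
with the sets `A ∪ {z}` for `A ∈ F ∪ {∅}`: then `z` is the unique abundant element of the new
family, yet it lies in no set of `F`, contradicting P3. So P3 gives every such family an abundant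
element `x`. If `x` were the only one, P3 puts `x` into every set of `F`; deleting `x` from all
sets is then injective, keeps the family union-closed and, as all sets have at least two
elements, free of `∅`. It also preserves the abundance of every `y ≠ x`, so an abundant element
of the reduced family is a second abundant element of `F`.
-/

def Poonen3 : Prop :=
  ∀ F : Finset (Finset ℕ), F.Nonempty → UnionClosed F → (∅ : Finset ℕ) ∉ F →
    ∀ x : ℕ, Abundant F x → (∀ y : ℕ, Abundant F y → y = x) → ∀ A ∈ F, x ∈ A

open Finset

variable {F : Finset (Finset ℕ)} {x z : ℕ}

lemma injOn_insert (hz : ∀ A ∈ F, z ∉ A) : Set.InjOn (insert z) (F : Set (Finset ℕ)) :=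
  fun A hA B hB hAB => by rw [← erase_insert (hz A hA), ← erase_insert (hz B hB), hAB]

lemma injOn_erase (hx : ∀ A ∈ F, x ∈ A) : Set.InjOn (·.erase x) (F : Set (Finset ℕ)) :=
  fun A hA B hB hAB => by
    rw [← insert_erase (hx A hA), ← insert_erase (hx B hB)]
    exact congrArg (insert x) hAB

lemma card_filter_mem_image {f : Finset ℕ → Finset ℕ} (hf : Set.InjOn f F) {y : ℕ}
    (hy : ∀ A ∈ F, y ∈ f A ↔ y ∈ A) :
    ((F.image f).filter (fun A => y ∈ A)).card = (F.filter (fun A => y ∈ A)).card := by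
  rw [filter_image, card_image_of_injOn (hf.mono (filter_subset _ _)), filter_congr hy]

lemma abundant_image_iff {f : Finset ℕ → Finset ℕ} (hf : Set.InjOn f F) {y : ℕ}
    (hy : ∀ A ∈ F, y ∈ f A ↔ y ∈ A) : Abundant (F.image f) y ↔ Abundant F y := by
  rw [Abundant, Abundant, card_filter_mem_image hf hy, card_image_of_injOn hf]

lemma not_abundant_of_forall_notMem (hx : ∀ A ∈ F, x ∉ A) : ¬ Abundant F x := by
  rw [Abundant, filter_eq_empty_iff.2 hx, card_empty]
  omega

lemma UnionClosed.image_erase_s13 (hF : UnionClosed F) (x : ℕ) :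
    UnionClosed (F.image (·.erase x)) := by
  intro A' hA' B' hB'
  obtain ⟨A, hA, rfl⟩ := mem_image.1 hA'
  obtain ⟨B, hB, rfl⟩ := mem_image.1 hB'
  exact mem_image.2 ⟨A ∪ B, hF A hA B hB, erase_union_distrib A B x⟩

lemma UnionClosed.image_insert (hF : UnionClosed F) (z : ℕ) :
    UnionClosed (F.image (insert z)) := by
  intro A' hA' B' hB'
  obtain ⟨A, hA, rfl⟩ := mem_image.1 hA'
  obtain ⟨B, hB, rfl⟩ := mem_image.1 hB'
  exact mem_image.2 ⟨A ∪ B, hF A hA B hB, insert_union_distrib z A B⟩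

lemma UnionClosed.insert_empty (hF : UnionClosed F) : UnionClosed (insert ∅ F) := by
  intro A hA B hB
  rcases mem_insert.1 hA with rfl | hA
  · rwa [empty_union]
  rcases mem_insert.1 hB with rfl | hB
  · rwa [union_empty]
  exact mem_insert_of_mem (hF A hA B hB)

def adjoinApex (F : Finset (Finset ℕ)) (z : ℕ) : Finset (Finset ℕ) :=
  F ∪ (insert ∅ F).image (insert z)

lemma unionClosed_adjoinApex (hF : UnionClosed F) (z : ℕ) :
    UnionClosed (adjoinApex F z) := by
  have hcone := hF.insert_empty.image_insert z
  have hmix : ∀ A ∈ F, ∀ B ∈ (insert ∅ F).image (insert z), A ∪ B ∈ adjoinApex F z := by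
    intro A hA B' hB'
    obtain ⟨B, hB, rfl⟩ := mem_image.1 hB'
    rw [union_insert]
    exact mem_union_right _ (mem_image_of_mem _ (hF.insert_empty A (mem_insert_of_mem hA) B hB))
  intro A hA B hB
  rcases mem_union.1 hA with hA | hA <;> rcases mem_union.1 hB with hB | hB
  · exact mem_union_left _ (hF A hA B hB)
  · exact hmix A hA B hB
  · exact union_comm A B ▸ hmix B hB A hA
  · exact mem_union_right _ (hcone A hA B hB)

lemma empty_notMem_adjoinApex (hemp : ∅ ∉ F) : ∅ ∉ adjoinApex F z := by
  rw [adjoinApex, mem_union, mem_image, not_or, not_exists]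
  exact ⟨hemp, fun A ⟨_, hA⟩ => insert_ne_empty z A hA⟩

lemma injOn_insert_insert_empty (hz : ∀ A ∈ F, z ∉ A) :
    Set.InjOn (insert z) ((insert ∅ F : Finset (Finset ℕ)) : Set (Finset ℕ)) :=
  injOn_insert ((forall_mem_insert _ _ _).2 ⟨notMem_empty z, hz⟩)

lemma disjoint_image_insert (hz : ∀ A ∈ F, z ∉ A) :
    Disjoint F ((insert ∅ F).image (insert z)) := by
  rw [disjoint_right, forall_mem_image]
  exact fun A _ hA => hz _ hA (mem_insert_self z A)

lemma card_adjoinApex (hz : ∀ A ∈ F, z ∉ A) (hemp : ∅ ∉ F) :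
    (adjoinApex F z).card = 2 * F.card + 1 := by
  rw [adjoinApex, card_union_of_disjoint (disjoint_image_insert hz),
    card_image_of_injOn (injOn_insert_insert_empty hz), card_insert_of_notMem hemp]
  ring

lemma abundant_adjoinApex (hz : ∀ A ∈ F, z ∉ A) (hemp : ∅ ∉ F) :
    Abundant (adjoinApex F z) z := by
  have hfilter :
      (adjoinApex F z).filter (fun A => z ∈ A) = (insert ∅ F).image (insert z) := by
    rw [adjoinApex, filter_union, filter_eq_empty_iff.2 hz, empty_union,
      filter_true_of_mem]
    exact forall_mem_image.2 fun A _ => mem_insert_self z A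
  rw [Abundant, hfilter, card_adjoinApex hz hemp,
    card_image_of_injOn (injOn_insert_insert_empty hz), card_insert_of_notMem hemp]
  omega

lemma card_filter_adjoinApex_of_ne (hz : ∀ A ∈ F, z ∉ A) {y : ℕ} (hyz : y ≠ z) :
    ((adjoinApex F z).filter (fun A => y ∈ A)).card =
      2 * (F.filter (fun A => y ∈ A)).card := by
  have hy : ∀ A ∈ insert ∅ F, y ∈ insert z A ↔ y ∈ A := fun A _ => by simp [hyz]
  rw [adjoinApex, filter_union, card_union_of_disjoint (disjoint_filter_filter
    (disjoint_image_insert hz)), card_filter_mem_image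
    (injOn_insert_insert_empty hz) hy, filter_insert, if_neg (notMem_empty y)]
  ring

lemma Abundant.of_adjoinApex (hz : ∀ A ∈ F, z ∉ A) (hemp : ∅ ∉ F) {y : ℕ} (hyz : y ≠ z)
    (hy : Abundant (adjoinApex F z) y) : Abundant F y := by
  rw [Abundant, card_filter_adjoinApex_of_ne hz hyz, card_adjoinApex hz hemp] at hy
  rw [Abundant]
  omega

lemma Poonen3.exists_abundant (P3 : Poonen3) (hne : F.Nonempty) (huc : UnionClosed F)
    (hemp : ∅ ∉ F) : ∃ x, Abundant F x := by
  by_contra! hnone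
  obtain ⟨z, hz⟩ := Infinite.exists_notMem_finset (F.sup id)
  have hzF : ∀ A ∈ F, z ∉ A := fun A hA hzA => hz (le_sup (f := id) hA hzA)
  have hunique : ∀ y, Abundant (adjoinApex F z) y → y = z := fun y hy =>
    by_contra fun hyz => hnone y (hy.of_adjoinApex hzF hemp hyz)
  obtain ⟨A, hA⟩ := hne
  exact hzF A hA <| P3 _ ⟨A, mem_union_left _ hA⟩ (unionClosed_adjoinApex huc z)
    (empty_notMem_adjoinApex hemp) z (abundant_adjoinApex hzF hemp) hunique A
    (mem_union_left _ hA)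

lemma Poonen3.exists_abundant_ne (P3 : Poonen3) (hne : F.Nonempty) (huc : UnionClosed F)
    (hcard : ∀ A ∈ F, 2 ≤ A.card) (hx : ∀ A ∈ F, x ∈ A) : ∃ y ≠ x, Abundant F y := by
  have hemp : ∅ ∉ F.image (·.erase x) := by
    rw [mem_image, not_exists]
    rintro A ⟨hA, hAx⟩
    have := card_erase_of_mem (hx A hA)
    rw [hAx, card_empty] at this
    have := hcard A hA
    omega
  obtain ⟨y, hy⟩ := P3.exists_abundant (hne.image _) (huc.image_erase_s13 x) hemp
  have hyx : y ≠ x := by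
    rintro rfl
    exact not_abundant_of_forall_notMem (forall_mem_image.2 fun A _ => notMem_erase y A) hy
  exact ⟨y, hyx, (abundant_image_iff (injOn_erase hx) fun A _ => by simp [hyx]).1 hy⟩

theorem poonen3_implies_cuihu2
    (P3 : ∀ F : Finset (Finset ℕ), F.Nonempty → UnionClosed F → (∅ : Finset ℕ) ∉ F →
      ∀ x : ℕ, Abundant F x → (∀ y : ℕ, Abundant F y → y = x) → ∀ A ∈ F, x ∈ A) :
    ∀ F : Finset (Finset ℕ), F.Nonempty → UnionClosed F → (∀ A ∈ F, 2 ≤ A.card) →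
      ∃ x y : ℕ, x ≠ y ∧ Abundant F x ∧ Abundant F y := by
  intro F hne huc hcard
  have hemp : ∅ ∉ F := fun h => by simpa using hcard ∅ h
  obtain ⟨x, hx⟩ := Poonen3.exists_abundant P3 hne huc hemp
  by_contra! hlonely
  have hxall := P3 F hne huc hemp x hx fun y hy => by_contra fun hyx => hlonely y x hyx hy hx
  obtain ⟨y, hyx, hy⟩ := Poonen3.exists_abundant_ne P3 hne huc hcard hxall
  exact hlonely y x hyx hy hx
end

section
/- If Conjecture CH2 holds (every finite nonempty union-closed family of finite sets whose smallest set has size at least 2 has at least two abundant elements), then Frankl's conjecture holds (every finite nonempty union-closed family 𝓕 of finite sets with ∅ ∉ 𝓕 has an abundant element). -/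
/-! If the smallest set of `F` has size at least two, CH2 gives an abundant element. Otherwise,
as `∅ ∉ F`, some singleton `{x}` lies in `F`, and `B ↦ {x} ∪ B` injects the sets avoiding `x`
into the sets other than `{x}` containing `x`; so `x` is abundant. -/

namespace UnionClosed

variable {F : Finset (Finset ℕ)} {x : ℕ}

theorem card_filter_notMem_lt_card_filter_mem (hF : UnionClosed F) (h0 : ∅ ∉ F)
    (hx : {x} ∈ F) : (F.filter (x ∉ ·)).card < (F.filter (x ∈ ·)).card := by
  have hmaps : Set.MapsTo (insert x) (F.filter (x ∉ ·) : Set (Finset ℕ))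
      ((F.filter (x ∈ ·)).erase {x} : Set (Finset ℕ)) := by
    intro B hB
    rw [Finset.mem_coe, Finset.mem_filter] at hB
    have hBne : B.Nonempty := Finset.nonempty_iff_ne_empty.mpr (ne_of_mem_of_not_mem hB.1 h0)
    refine Finset.mem_erase.mpr
      ⟨fun h => ?_, Finset.mem_filter.mpr ⟨?_, Finset.mem_insert_self x B⟩⟩
    · obtain ⟨b, hb⟩ := hBne
      have hbx : b = x := Finset.mem_singleton.mp (h ▸ Finset.mem_insert_of_mem hb)
      exact hB.2 (hbx ▸ hb)
    · simpa using hF _ hx _ hB.1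
  have hinj : Set.InjOn (insert x) (F.filter (x ∉ ·) : Set (Finset ℕ)) := by
    intro B hB C hC h
    rw [Finset.coe_filter] at hB hC
    rw [← Finset.erase_insert hB.2, ← Finset.erase_insert hC.2, h]
  calc (F.filter (x ∉ ·)).card
      ≤ ((F.filter (x ∈ ·)).erase {x}).card := Finset.card_le_card_of_injOn _ hmaps hinj
    _ < (F.filter (x ∈ ·)).card :=
      Finset.card_erase_lt_of_mem (Finset.mem_filter.mpr ⟨hx, Finset.mem_singleton_self x⟩)

theorem abundant_of_singleton_mem (hF : UnionClosed F) (h0 : ∅ ∉ F) (hx : {x} ∈ F) :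
    Abundant F x := by
  have hsplit := Finset.card_filter_add_card_filter_not (s := F) (x ∈ ·)
  have hlt := hF.card_filter_notMem_lt_card_filter_mem h0 hx
  unfold Abundant
  omega

end UnionClosed

theorem Finset.exists_singleton_mem_of_card_lt_two {F : Finset (Finset ℕ)} {A : Finset ℕ}
    (hA : A ∈ F) (h0 : ∅ ∉ F) (hA2 : A.card < 2) : ∃ x, {x} ∈ F := by
  have hpos : 0 < A.card := Finset.card_pos.mpr
    (Finset.nonempty_iff_ne_empty.mpr (ne_of_mem_of_not_mem hA h0))
  obtain ⟨x, rfl⟩ := Finset.card_eq_one.mp (by omega : A.card = 1)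
  exact ⟨x, hA⟩

theorem cuihu2_implies_frankl
    (CH2 : ∀ F : Finset (Finset ℕ), F.Nonempty → UnionClosed F → (∀ A ∈ F, 2 ≤ A.card) →
      ∃ x y : ℕ, x ≠ y ∧ Abundant F x ∧ Abundant F y) :
    ∀ F : Finset (Finset ℕ), F.Nonempty → UnionClosed F → (∅ : Finset ℕ) ∉ F →
      ∃ x : ℕ, Abundant F x := by
  intro F hne hF h0
  by_cases hmin : ∀ A ∈ F, 2 ≤ A.card
  · obtain ⟨x, -, -, hx, -⟩ := CH2 F hne hF hmin
    exact ⟨x, hx⟩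
  · obtain ⟨A, hA, hA2⟩ := by simpa only [not_forall, not_le, exists_prop] using hmin
    obtain ⟨x, hx⟩ := Finset.exists_singleton_mem_of_card_lt_two hA h0 hA2
    exact ⟨x, hF.abundant_of_singleton_mem h0 hx⟩
end

section
/- The following two statements are equivalent: (i) every finite nonempty union-closed family 𝓕 of finite sets whose smallest set has size at least 2 has at least two abundant elements; (ii) for every finite union-closed family 𝓕 of finite sets with 𝓕 nonempty, 𝓕 ≠ {∅}, and every non-empty set of 𝓕 of size at least 2, there are at least two elements x with 2·|{A ∈ 𝓕 : x ∈ A}| ≥ |𝓕| (i.e. each belongs to at least half of the sets of 𝓕). -/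
/-!
Adding or removing the empty set changes neither union-closedness nor the number of sets
containing a given element, but changes `|𝓕|` by one. Since that count is an integer, being in
more than half of the sets of `𝓕 \ {∅}` means being in at least half of those of `𝓕`, and being in
at least half of the sets of `𝓕 ∪ {∅}` means being in more than half of those of `𝓕` when `∅ ∉ 𝓕`.
-/

open Finset

theorem Finset.filter_mem_erase_empty {α : Type*} [DecidableEq α] (F : Finset (Finset α))
    (x : α) : (F.erase ∅).filter (fun A => x ∈ A) = F.filter (fun A => x ∈ A) := by
  rw [filter_erase]
  exact erase_eq_of_notMem (by simp)

theorem Finset.filter_mem_insert_empty {α : Type*} [DecidableEq α] (F : Finset (Finset α))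
    (x : α) : (insert ∅ F).filter (fun A => x ∈ A) = F.filter (fun A => x ∈ A) := by
  rw [filter_insert]
  simp

namespace UnionClosed

variable {F : Finset (Finset ℕ)}

theorem erase_empty (hF : UnionClosed F) : UnionClosed (F.erase ∅) := by
  intro A hA B hB
  rw [mem_erase] at hA hB ⊢
  exact ⟨fun hAB => hA.1 (union_eq_empty.mp hAB).1, hF A hA.2 B hB.2⟩

theorem insert_empty_s18 (hF : UnionClosed F) : UnionClosed (insert ∅ F) := by
  intro A hA B hB
  rcases mem_insert.mp hA with rfl | hAF
  · simpa using hB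
  rcases mem_insert.mp hB with rfl | hBF
  · simpa using hA
  · exact mem_insert_of_mem (hF A hAF B hBF)

end UnionClosed

theorem Abundant.card_le_two_mul_card_filter_of_erase_empty {F : Finset (Finset ℕ)} {x : ℕ}
    (hx : Abundant (F.erase ∅) x) : F.card ≤ 2 * (F.filter (fun A => x ∈ A)).card := by
  have hcard : F.card - 1 ≤ (F.erase ∅).card := pred_card_le_card_erase
  rw [Abundant, filter_mem_erase_empty] at hx
  omega

theorem abundant_of_card_insert_empty_le {F : Finset (Finset ℕ)} {x : ℕ} (h0 : ∅ ∉ F)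
    (hx : (insert ∅ F).card ≤ 2 * ((insert ∅ F).filter (fun A => x ∈ A)).card) :
    Abundant F x := by
  rw [card_insert_of_notMem h0, filter_mem_insert_empty] at hx
  rw [Abundant]
  omega

theorem cuihu2_equiv :
    (∀ F : Finset (Finset ℕ), F.Nonempty → UnionClosed F → (∀ A ∈ F, 2 ≤ A.card) →
      ∃ x y : ℕ, x ≠ y ∧ Abundant F x ∧ Abundant F y) ↔
    (∀ F : Finset (Finset ℕ), F.Nonempty → UnionClosed F → F ≠ {∅} →
      (∀ A ∈ F, A ≠ ∅ → 2 ≤ A.card) →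
      ∃ x y : ℕ, x ≠ y ∧
        2 * (F.filter (fun A => x ∈ A)).card ≥ F.card ∧
        2 * (F.filter (fun A => y ∈ A)).card ≥ F.card) := by
  constructor
  · intro h F hne huc hns hcard
    have hne' : (F.erase ∅).Nonempty := by
      rw [nonempty_iff_ne_empty, Ne, erase_eq_empty_iff, not_or]
      exact ⟨hne.ne_empty, hns⟩
    obtain ⟨x, y, hxy, hx, hy⟩ := h (F.erase ∅) hne' huc.erase_empty
      fun A hA => hcard A (mem_of_mem_erase hA) (ne_of_mem_erase hA)
    exact ⟨x, y, hxy, hx.card_le_two_mul_card_filter_of_erase_empty,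
      hy.card_le_two_mul_card_filter_of_erase_empty⟩
  · intro h F hne huc hcard
    have h0 : ∅ ∉ F := fun h0 => by simpa using hcard ∅ h0
    have hns : insert ∅ F ≠ {∅} := by
      obtain ⟨A, hA⟩ := hne
      intro hF
      have hA0 : A = ∅ := mem_singleton.mp (hF ▸ mem_insert_of_mem hA)
      exact h0 (hA0 ▸ hA)
    obtain ⟨x, y, hxy, hx, hy⟩ := h (insert ∅ F) (insert_nonempty _ _) huc.insert_empty_s18 hns
      fun A hA hA0 => hcard A ((mem_insert.mp hA).resolve_left hA0)
    exact ⟨x, y, hxy, abundant_of_card_insert_empty_le h0 hx,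
      abundant_of_card_insert_empty_le h0 hy⟩
end
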